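/- arXiv:2103.00403 — 2 statements merged into one kernel-verified Lean document; each statement's English description precedes it below -/
import Mathlib

section
/- Let G be the complement of a cycle C of length at least 5. Then for every edge e of G, the simple contraction G/e is a 2-cograph; hence G is an induced-minor-minimal non-2-cograph. -/
/-- A graph is 2-connected if it has at least 3 vertices, is connected,
and remains connected after deleting any single vertex. -/
def TwoConnected {V : Type} [Fintype V] (G : SimpleGraph V) : Prop :=
  3 ≤ Fintype.card V ∧ G.Connected ∧
    ∀ v : V, (G.induce ({v}ᶜ : Set V)).Connected

/-- A graph is a 2-cograph if it has no induced subgraph `H` such that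
both `H` and its complement are 2-connected. -/
def IsTwoCograph {V : Type} [Fintype V] (G : SimpleGraph V) : Prop :=
  ∀ S : Finset V, ¬ (TwoConnected (G.induce (S : Set V)) ∧
      TwoConnected ((G.induce (S : Set V))ᶜ))

/-- `H` is an induced minor of `G`: witnessed by pairwise disjoint nonempty
connected branch sets, with adjacency in `H` iff there is an edge between
the corresponding branch sets. -/
def IsInducedMinor {V W : Type} (G : SimpleGraph V) (H : SimpleGraph W) : Prop :=
  ∃ B : W → Set V,
    (∀ w, (B w).Nonempty) ∧
    (∀ w, (G.induce (B w)).Connected) ∧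
    (Pairwise fun w w' => Disjoint (B w) (B w')) ∧
    ∀ w w', w ≠ w' → (H.Adj w w' ↔ ∃ a ∈ B w, ∃ b ∈ B w', G.Adj a b)

/-- `G` is an induced-minor-minimal non-2-cograph: `G` is not a 2-cograph but
every proper induced minor of `G` (one with fewer vertices) is a 2-cograph. -/
def IsIMMNon2Cograph {V : Type} [Fintype V] (G : SimpleGraph V) : Prop :=
  ¬ IsTwoCograph G ∧
    ∀ (W : Type) [Fintype W], ∀ H : SimpleGraph W,
      IsInducedMinor G H → Fintype.card W < Fintype.card V → IsTwoCograph H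

/-- The simple contraction `G/uv`: the vertex `v` is removed and `u` plays
the role of the merged vertex. -/
def contractEdge {V : Type} (G : SimpleGraph V) (u v : V) :
    SimpleGraph {x : V // x ≠ v} :=
  SimpleGraph.fromRel fun a b =>
    G.Adj a b ∨ ((a : V) = u ∧ G.Adj v b) ∨ ((b : V) = u ∧ G.Adj v (a : V))

/-! The cycle `Cₙ` and, for `n ≥ 5`, its complement are both 2-connected, so `Cₙᶜ` is not a
2-cograph. Now let `H` be an induced minor of `Cₙᶜ` with fewer than `n` vertices, and suppose the
complement `K` of some induced subgraph `H[S]` were 2-connected. Picking one vertex in each branch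
set gives an injective map `S → Fin n` that sends edges of `K` to edges of `Cₙ`. Every vertex of
`K` has two distinct neighbours, and these land on both cycle-neighbours of its image, so the image
is closed under successor and hence is all of `Fin n`, contradicting `|S| < n`. Finally, `G/e` is
an induced minor of `G` with one vertex fewer. -/

open SimpleGraph

theorem SimpleGraph.compl_induce {V : Type*} (G : SimpleGraph V) (s : Set V) :
    (G.induce s)ᶜ = Gᶜ.induce s := by
  ext a b
  simp [Subtype.ext_iff]

theorem Fintype.exists_ne_ne_of_three_le_card {V : Type*} [Fintype V]
    (h : 3 ≤ Fintype.card V) (a b : V) : ∃ x, x ≠ a ∧ x ≠ b := by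
  classical
  obtain ⟨x, -, hx⟩ := Finset.exists_mem_notMem_of_card_lt_card
    (s := {a, b}) (t := Finset.univ)
    (Finset.card_le_two.trans_lt (by rw [Finset.card_univ]; omega))
  exact ⟨x, by simpa [not_or] using hx⟩

section TwoConnected

variable {V V' : Type} [Fintype V] [Fintype V'] {G : SimpleGraph V}

theorem TwoConnected.of_iso {G' : SimpleGraph V'} (e : G ≃g G') (h : TwoConnected G) :
    TwoConnected G' := by
  obtain ⟨hcard, hconn, hdel⟩ := h
  refine ⟨Fintype.card_congr e.toEquiv ▸ hcard, e.connected_iff.mp hconn, fun v => ?_⟩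
  have hbij : Set.BijOn e {e.symm v}ᶜ {v}ᶜ := by
    have := e.toEquiv.bijOn_image (s := {e.symm v}ᶜ)
    rwa [Set.image_compl_eq e.toEquiv.bijective, Set.image_singleton,
      RelIso.coe_fn_toEquiv, RelIso.apply_symm_apply] at this
  exact (e.induce hbij).connected_iff.mp (hdel _)

theorem twoConnected_of_connected_induce_compl (hV : 3 ≤ Fintype.card V)
    (h : ∀ v, (G.induce {v}ᶜ).Connected) : TwoConnected G := by
  have : Nonempty V := Fintype.card_pos_iff.mp (by omega)
  refine ⟨hV, ⟨fun a b => ?_⟩, h⟩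
  obtain ⟨x, hxa, hxb⟩ := Fintype.exists_ne_ne_of_three_le_card hV a b
  exact ((h x).preconnected ⟨a, hxa.symm⟩ ⟨b, hxb.symm⟩).map (Embedding.induce _).toHom

theorem TwoConnected.exists_adj_adj_ne (h : TwoConnected G) (v : V) :
    ∃ u₁ u₂, u₁ ≠ u₂ ∧ G.Adj v u₁ ∧ G.Adj v u₂ := by
  obtain ⟨hcard, hconn, hdel⟩ := h
  have : Nontrivial V := Fintype.one_lt_card_iff_nontrivial.mp (by omega)
  obtain ⟨u, hu⟩ := hconn.preconnected.exists_adj_of_nontrivial v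
  obtain ⟨x, hxu, hxv⟩ := Fintype.exists_ne_ne_of_three_le_card hcard u v
  have : Nontrivial ({u}ᶜ : Set V) :=
    ⟨⟨v, hu.ne⟩, ⟨x, hxu⟩, fun h => hxv (congrArg Subtype.val h).symm⟩
  obtain ⟨w, hw⟩ := (hdel u).preconnected.exists_adj_of_nontrivial ⟨v, hu.ne⟩
  exact ⟨u, w, fun h => w.2 h.symm, hu, hw⟩

theorem not_isTwoCograph_of_twoConnected (h : TwoConnected G) (hc : TwoConnected Gᶜ) :
    ¬ IsTwoCograph G := by
  intro hG
  apply hG Finset.univ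
  rw [compl_induce]
  exact ⟨h.of_iso ⟨(Equiv.subtypeUnivEquiv Finset.mem_univ).symm, Iff.rfl⟩,
    hc.of_iso ⟨(Equiv.subtypeUnivEquiv Finset.mem_univ).symm, Iff.rfl⟩⟩

end TwoConnected

section Cycle

open Fin.CommRing

theorem cycleGraph_adj_add_left {n : ℕ} (v a b : Fin (n + 2)) :
    (cycleGraph (n + 2)).Adj (v + a) (v + b) ↔ (cycleGraph (n + 2)).Adj a b := by
  simp only [cycleGraph_adj, add_sub_add_left_eq_sub]

theorem cycleGraph_induce_compl_singleton_connected (n : ℕ) (v : Fin (n + 2)) :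
    ((cycleGraph (n + 2)).induce {v}ᶜ).Connected := by
  let f : pathGraph (n + 1) →g (cycleGraph (n + 2)).induce {v}ᶜ :=
    { toFun := fun k => ⟨v + k.succ, by simp⟩
      map_rel' := fun {k l} hkl => by
        change (cycleGraph (n + 2)).Adj (v + k.succ) (v + l.succ)
        rw [cycleGraph_adj_add_left]
        exact pathGraph_le_cycleGraph (by simpa [pathGraph_adj] using hkl) }
  refine (pathGraph_connected n).map f ?_
  rintro ⟨x, hx⟩
  obtain ⟨k, hk⟩ := Fin.exists_succ_eq.mpr (sub_ne_zero.mpr hx)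
  exact ⟨k, Subtype.ext (by simp [f, hk])⟩

theorem twoConnected_cycleGraph (n : ℕ) : TwoConnected (cycleGraph (n + 3)) :=
  twoConnected_of_connected_induce_compl (by simp)
    (cycleGraph_induce_compl_singleton_connected (n + 1))

theorem compl_cycleGraph_adj_add {n : ℕ} (a : Fin (n + 2)) {k : Fin (n + 2)} (h₀ : k ≠ 0)
    (h₁ : k ≠ 1) (h₂ : k ≠ -1) : (cycleGraph (n + 2))ᶜ.Adj a (a + k) := by
  rw [compl_adj, cycleGraph_adj, sub_add_cancel_left, add_sub_cancel_left, neg_eq_iff_eq_neg]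
  exact ⟨by simpa using h₀, by tauto⟩

theorem compl_cycleGraph_adj_add_two {n : ℕ} (a : Fin (n + 4)) :
    (cycleGraph (n + 4))ᶜ.Adj a (a + 2) :=
  compl_cycleGraph_adj_add a (by simp [Fin.ext_iff, Nat.mod_eq_of_lt])
    (by simp [Fin.ext_iff, Nat.mod_eq_of_lt]) (by simp [Fin.ext_iff, Nat.mod_eq_of_lt])

theorem compl_cycleGraph_adj_add_three {n : ℕ} (a : Fin (n + 5)) :
    (cycleGraph (n + 5))ᶜ.Adj a (a + 3) :=
  compl_cycleGraph_adj_add a (by simp [Fin.ext_iff, Nat.mod_eq_of_lt])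
    (by simp [Fin.ext_iff, Nat.mod_eq_of_lt]) (by simp [Fin.ext_iff, Nat.mod_eq_of_lt])

theorem compl_cycleGraph_induce_compl_singleton_reachable_add_one {m : ℕ} {v a : Fin (m + 5)}
    (ha : a ≠ v) (ha' : a + 1 ≠ v) :
    ((cycleGraph (m + 5))ᶜ.induce {v}ᶜ).Reachable ⟨a, ha⟩ ⟨a + 1, ha'⟩ := by
  by_cases h₃ : a + 3 = v
  · -- the common neighbour `a + 3` is deleted, so go round through `a + 2` and `a + 4`
    have h₂ : a + 2 ≠ v := by rw [← h₃]; simp [Fin.ext_iff, Nat.mod_eq_of_lt]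
    have h₄ : a + 4 ≠ v := by rw [← h₃]; simp [Fin.ext_iff, Nat.mod_eq_of_lt]
    have e₁ : ((cycleGraph (m + 5))ᶜ.induce {v}ᶜ).Adj ⟨a, ha⟩ ⟨a + 2, h₂⟩ :=
      compl_cycleGraph_adj_add_two a
    have e₂ : ((cycleGraph (m + 5))ᶜ.induce {v}ᶜ).Adj ⟨a + 2, h₂⟩ ⟨a + 4, h₄⟩ := by
      change (cycleGraph (m + 5))ᶜ.Adj (a + 2) (a + 4)
      rw [show a + 4 = a + 2 + 2 by ring]
      exact compl_cycleGraph_adj_add_two (a + 2)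
    have e₃ : ((cycleGraph (m + 5))ᶜ.induce {v}ᶜ).Adj ⟨a + 4, h₄⟩ ⟨a + 1, ha'⟩ := by
      change (cycleGraph (m + 5))ᶜ.Adj (a + 4) (a + 1)
      rw [show a + 4 = a + 1 + 3 by ring]
      exact (compl_cycleGraph_adj_add_three (a + 1)).symm
    exact e₁.reachable.trans (e₂.reachable.trans e₃.reachable)
  · have e₁ : ((cycleGraph (m + 5))ᶜ.induce {v}ᶜ).Adj ⟨a, ha⟩ ⟨a + 3, h₃⟩ :=
      compl_cycleGraph_adj_add_three a
    have e₂ : ((cycleGraph (m + 5))ᶜ.induce {v}ᶜ).Adj ⟨a + 3, h₃⟩ ⟨a + 1, ha'⟩ := by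
      change (cycleGraph (m + 5))ᶜ.Adj (a + 3) (a + 1)
      rw [show a + 3 = a + 1 + 2 by ring]
      exact (compl_cycleGraph_adj_add_two (a + 1)).symm
    exact e₁.reachable.trans e₂.reachable

theorem compl_cycleGraph_induce_compl_singleton_connected (m : ℕ) (v : Fin (m + 5)) :
    ((cycleGraph (m + 5))ᶜ.induce {v}ᶜ).Connected := by
  have : Nonempty ({v}ᶜ : Set (Fin (m + 5))) := ⟨⟨v + 1, by simp⟩⟩
  refine ⟨fun ⟨a, ha⟩ ⟨b, hb⟩ => ?_⟩
  by_cases hC : (cycleGraph (m + 5)).Adj a b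
  · rcases cycleGraph_adj.mp hC with h | h
    · obtain rfl : a = b + 1 := sub_eq_iff_eq_add'.mp h
      exact (compl_cycleGraph_induce_compl_singleton_reachable_add_one hb ha).symm
    · obtain rfl : b = a + 1 := sub_eq_iff_eq_add'.mp h
      exact compl_cycleGraph_induce_compl_singleton_reachable_add_one ha hb
  · by_cases hab : a = b
    · subst hab; rfl
    · exact Adj.reachable (G := (cycleGraph (m + 5))ᶜ.induce {v}ᶜ) ⟨hab, hC⟩

theorem twoConnected_compl_cycleGraph (m : ℕ) : TwoConnected (cycleGraph (m + 5))ᶜ :=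
  twoConnected_of_connected_induce_compl (by simp)
    (compl_cycleGraph_induce_compl_singleton_connected m)

end Cycle

theorem surjective_of_injective_hom_cycleGraph {W : Type*} [Nonempty W] {K : SimpleGraph W}
    {n : ℕ} (f : K →g cycleGraph (n + 2)) (hf : Function.Injective f)
    (hK : ∀ w, ∃ u₁ u₂, u₁ ≠ u₂ ∧ K.Adj w u₁ ∧ K.Adj w u₂) : Function.Surjective f := by
  have hsucc : ∀ x ∈ Set.range f, x + 1 ∈ Set.range f := by
    rintro _ ⟨w, rfl⟩
    obtain ⟨u₁, u₂, hne, h₁, h₂⟩ := hK w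
    have n₁ : f u₁ ∈ (cycleGraph (n + 2)).neighborSet (f w) := f.map_adj h₁
    have n₂ : f u₂ ∈ (cycleGraph (n + 2)).neighborSet (f w) := f.map_adj h₂
    rw [cycleGraph_neighborSet] at n₁ n₂
    rcases n₁ with h₁ | h₁
    · rcases n₂ with h₂ | h₂
      · exact absurd (hf (h₁.trans h₂.symm)) hne
      · exact ⟨u₂, h₂⟩
    · exact ⟨u₁, h₁⟩
  obtain ⟨w₀⟩ := ‹Nonempty W›
  have hall : ∀ k : Fin (n + 2), f w₀ + k ∈ Set.range f :=
    Fin.induction (by simp) fun k hk => by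
      rw [← Fin.coeSucc_eq_succ, ← add_assoc]
      exact hsucc _ hk
  intro x
  simpa using hall (x - f w₀)

theorem IsInducedMinor.isTwoCograph_of_compl_cycleGraph {n : ℕ} {W : Type} [Fintype W]
    {H : SimpleGraph W} (hH : IsInducedMinor (cycleGraph (n + 2))ᶜ H)
    (hW : Fintype.card W < n + 2) : IsTwoCograph H := by
  obtain ⟨B, hne, -, hdisj, hadj⟩ := hH
  choose f hf using hne
  have hinj : Function.Injective f := fun w w' h => by
    by_contra hww
    exact Set.disjoint_left.mp (hdisj hww) (hf w) (h ▸ hf w')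
  rintro S ⟨-, hK⟩
  rw [compl_induce] at hK
  -- non-adjacent vertices of `H` have no `(cycleGraph (n + 2))ᶜ`-edge between their branch sets
  let φ : Hᶜ.induce (S : Set W) →g cycleGraph (n + 2) :=
    { toFun := fun w => f w
      map_rel' := fun {w w'} ⟨hww, hH⟩ => by
        by_contra hC
        exact hH ((hadj _ _ hww).mpr ⟨f w, hf w, f w', hf w', hinj.ne hww, hC⟩) }
  have : Nonempty (S : Set W) := Fintype.card_pos_iff.mp (zero_lt_three.trans_le hK.1)
  have hφ := surjective_of_injective_hom_cycleGraph φ (hinj.comp Subtype.val_injective)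
    hK.exists_adj_adj_ne
  have : n + 2 ≤ Fintype.card W := calc
    n + 2 = Fintype.card (Fin (n + 2)) := (Fintype.card_fin _).symm
    _ ≤ Fintype.card (S : Set W) := Fintype.card_le_of_surjective φ hφ
    _ ≤ Fintype.card W := Fintype.card_le_of_injective _ Subtype.val_injective
  omega

theorem contractEdge_isInducedMinor {V : Type} {G : SimpleGraph V} {u v : V} (huv : G.Adj u v) :
    IsInducedMinor G (contractEdge G u v) := by
  classical
  refine ⟨fun w => if (w : V) = u then {u, v} else {(w : V)}, fun w => ?_, fun w => ?_,
    fun w w' hww => ?_, fun w w' hww => ?_⟩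
  · dsimp only
    split_ifs <;> simp
  · dsimp only
    by_cases h : (w : V) = u
    · rw [if_pos h]
      exact induce_pair_connected_of_adj huv
    · rw [if_neg h, induce_singleton_eq_top]
      exact connected_top
  · have := w.2
    have := w'.2
    dsimp only
    split_ifs with h h' h' <;> simp_all [Subtype.ext_iff]
  · have := w.2
    have := w'.2
    simp only [contractEdge, fromRel_adj]
    split_ifs with h h' h' <;> simp_all [Subtype.ext_iff, G.adj_comm]

theorem IsIMMNon2Cograph.isTwoCograph_contractEdge {V : Type} [Fintype V] [DecidableEq V]
    {G : SimpleGraph V} (hG : IsIMMNon2Cograph G) {u v : V} (huv : G.Adj u v) :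
    IsTwoCograph (contractEdge G u v) :=
  hG.2 _ _ (contractEdge_isInducedMinor huv) (Fintype.card_subtype_lt (x := v) (by simp))

theorem isIMMNon2Cograph_compl_cycleGraph (m : ℕ) : IsIMMNon2Cograph (cycleGraph (m + 5))ᶜ := by
  refine ⟨not_isTwoCograph_of_twoConnected (twoConnected_compl_cycleGraph m) ?_,
    fun W _ H hH hW => hH.isTwoCograph_of_compl_cycleGraph (n := m + 3) (by simpa using hW)⟩
  rw [compl_compl]
  exact twoConnected_cycleGraph (m + 2)

theorem complement_cycle_inducedMinorMinimal (n : ℕ) (hn : 5 ≤ n) :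
    (∀ u v : Fin n, (SimpleGraph.cycleGraph n)ᶜ.Adj u v →
      IsTwoCograph (contractEdge (SimpleGraph.cycleGraph n)ᶜ u v)) ∧
    IsIMMNon2Cograph (SimpleGraph.cycleGraph n)ᶜ := by
  obtain ⟨m, rfl⟩ : ∃ m, n = m + 5 := ⟨n - 5, by omega⟩
  have h := isIMMNon2Cograph_compl_cycleGraph m
  exact ⟨fun u v huv => h.isTwoCograph_contractEdge huv, h⟩
end

section
/- Let G be a graph such that G and its complement are both induced-minor-minimal non-2-cographs. Then either G or its complement is critically 2-connected, or both G and its complement have vertex connectivity exactly two. -/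
/-- A 2-connected graph is critically 2-connected if deleting any single
vertex leaves a graph that is not 2-connected. -/
def CriticallyTwoConnected {V : Type} [Fintype V] [DecidableEq V] (G : SimpleGraph V) : Prop :=
  TwoConnected G ∧ ∀ v : V, ¬ TwoConnected (G.induce ({v}ᶜ : Set V))

/-- `G` has vertex connectivity exactly two: it is 2-connected and has a
2-element vertex cut. -/
def HasConnectivityTwo {V : Type} [Fintype V] [DecidableEq V] (G : SimpleGraph V) : Prop :=
  TwoConnected G ∧ ∃ s t : V, s ≠ t ∧ ¬ (G.induce (({s, t} : Set V)ᶜ)).Connected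

/-!
Minimality forces the whole graph to be the witness of non-2-cographness: if `G[S]` and its
complement are 2-connected for a proper subset `S`, then `G[S]` is a smaller non-2-cograph. So
`G` and `Gᶜ` are 2-connected, which needs at least four vertices. If `G` is not critically
2-connected, some `G - v` is 2-connected; as `G - v` is a 2-cograph, its complement `Gᶜ - v` is
not 2-connected, so `Gᶜ - v` has a cut vertex `w` and `{v, w}` cuts `Gᶜ`. Exchanging `G` and `Gᶜ`
gives the other half.
-/

open SimpleGraph

namespace SimpleGraph

variable {V : Type} {G : SimpleGraph V}

lemma induce_compl (G : SimpleGraph V) (s : Set V) : Gᶜ.induce s = (G.induce s)ᶜ := by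
  ext a b
  simp [Subtype.ext_iff]

noncomputable def induceInduceIso (G : SimpleGraph V) (s : Set V) (t : Set s) :
    (G.induce s).induce t ≃g G.induce (Subtype.val '' t) where
  toEquiv := Equiv.Set.image Subtype.val t Subtype.val_injective
  map_rel_iff' := Iff.rfl

lemma Connected.adj_of_card_eq_two [Fintype V] (hG : G.Connected) (hcard : Fintype.card V = 2)
    {x y : V} (hxy : x ≠ y) : G.Adj x y := by
  obtain ⟨p⟩ := hG.preconnected x y
  have hp : ¬ p.Nil := Walk.not_nil_of_ne hxy
  have hsnd : p.snd = y := by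
    by_contra hne
    have : 2 < Fintype.card V :=
      Fintype.two_lt_card_iff.2 ⟨x, y, p.snd, hxy, (p.adj_snd hp).ne, Ne.symm hne⟩
    omega
  exact hsnd ▸ p.adj_snd hp

lemma isInducedMinor_induce (G : SimpleGraph V) (s : Set V) : IsInducedMinor G (G.induce s) := by
  refine ⟨fun w => {(w : V)}, fun w => Set.singleton_nonempty _, fun w => ?_, ?_, ?_⟩
  · rw [induce_singleton_eq_top]
    exact connected_top
  · intro w w' h
    simpa using Subtype.val_injective.ne h
  · intro w w' _
    simp

end SimpleGraph

section TwoConnected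

variable {V W : Type} [Fintype V] [Fintype W] {G : SimpleGraph V} {H : SimpleGraph W}

lemma TwoConnected.of_iso_s16 (e : G ≃g H) (hG : TwoConnected G) : TwoConnected H := by
  obtain ⟨h3, hc, hdel⟩ := hG
  refine ⟨Fintype.card_congr e.toEquiv ▸ h3, e.connected_iff.1 hc, fun w => ?_⟩
  have e' : G.induce ({e.symm w}ᶜ : Set V) ≃g H.induce ({w}ᶜ : Set W) :=
    e.induce (e.toEquiv.bijOn fun _ => e.toEquiv.eq_symm_apply.symm.not)
  exact e'.connected_iff.1 (hdel _)

lemma SimpleGraph.Iso.twoConnected_iff (e : G ≃g H) : TwoConnected G ↔ TwoConnected H :=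
  ⟨.of_iso e, .of_iso e.symm⟩

lemma twoConnected_induce_of_forall_mem {s : Set V} [Fintype s] (hs : ∀ v, v ∈ s) :
    TwoConnected (G.induce s) ↔ TwoConnected G :=
  Iso.twoConnected_iff
    ((Iso.refl.induce (Set.eq_univ_of_forall hs ▸ Set.bijOn_id s)).trans (induceUnivIso G))

lemma IsTwoCograph.not_twoConnected_and_compl (hG : IsTwoCograph G) :
    ¬ (TwoConnected G ∧ TwoConnected Gᶜ) := by
  have hmem (v : V) : v ∈ ((Finset.univ : Finset V) : Set V) := by simp
  have h := hG Finset.univ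
  rwa [← induce_compl, twoConnected_induce_of_forall_mem hmem,
    twoConnected_induce_of_forall_mem hmem] at h

lemma TwoConnected.four_le_card (hG : TwoConnected G) (hGc : TwoConnected Gᶜ) :
    4 ≤ Fintype.card V := by
  classical
  have h3 := hG.1
  by_contra! hlt
  obtain ⟨v⟩ : Nonempty V := Fintype.card_pos_iff.1 (by omega)
  have hcard : Fintype.card ({v}ᶜ : Set V) = 2 := by
    rw [Fintype.card_compl_set, Set.card_singleton]
    omega
  obtain ⟨x, y, hxy⟩ := Fintype.exists_pair_of_one_lt_card (hcard ▸ one_lt_two)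
  exact ((hGc.2.2 v).adj_of_card_eq_two hcard hxy).2 ((hG.2.2 v).adj_of_card_eq_two hcard hxy)

lemma TwoConnected.hasConnectivityTwo_of_not_twoConnected_induce [DecidableEq V]
    (hG : TwoConnected G) (h4 : 4 ≤ Fintype.card V) {v : V}
    (hv : ¬ TwoConnected (G.induce ({v}ᶜ : Set V))) :
    HasConnectivityTwo G := by
  obtain ⟨w, hw⟩ : ∃ w : ({v}ᶜ : Set V), ¬ ((G.induce {v}ᶜ).induce {w}ᶜ).Connected := by
    by_contra! h
    refine hv ⟨?_, hG.2.2 v, h⟩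
    rw [Fintype.card_compl_set, Set.card_singleton]
    omega
  have hset : Subtype.val '' ({w}ᶜ : Set ({v}ᶜ : Set V)) = {v, ↑w}ᶜ := by
    ext x
    simp
  refine ⟨hG, v, w, fun h => w.2 h.symm, fun hcon => hw ?_⟩
  rwa [(G.induceInduceIso _ _).connected_iff, hset]

end TwoConnected

namespace IsIMMNon2Cograph

variable {V : Type} [Fintype V] {G : SimpleGraph V}

lemma isTwoCograph_induce (hG : IsIMMNon2Cograph G) {s : Set V} [Fintype s]
    (hs : Fintype.card s < Fintype.card V) : IsTwoCograph (G.induce s) :=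
  hG.2 _ _ (isInducedMinor_induce G s) hs

lemma twoConnected_and_compl (hG : IsIMMNon2Cograph G) : TwoConnected G ∧ TwoConnected Gᶜ := by
  obtain ⟨S, hS⟩ := not_forall_not.1 hG.1
  by_cases hSu : ∀ v, v ∈ (S : Set V)
  · rwa [← induce_compl, twoConnected_induce_of_forall_mem hSu,
      twoConnected_induce_of_forall_mem hSu] at hS
  · obtain ⟨v, hv⟩ := not_forall.1 hSu
    exact absurd hS (hG.isTwoCograph_induce (Fintype.card_subtype_lt hv)).not_twoConnected_and_compl

lemma hasConnectivityTwo_compl_of_twoConnected_induce [DecidableEq V] (hG : IsIMMNon2Cograph G)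
    (hGc : TwoConnected Gᶜ) (h4 : 4 ≤ Fintype.card V) {v : V}
    (hv : TwoConnected (G.induce ({v}ᶜ : Set V))) :
    HasConnectivityTwo Gᶜ := by
  have hcard : Fintype.card ({v}ᶜ : Set V) < Fintype.card V := by
    rw [Fintype.card_compl_set, Set.card_singleton]
    omega
  refine hGc.hasConnectivityTwo_of_not_twoConnected_induce h4 (v := v) fun hvc => ?_
  rw [induce_compl] at hvc
  exact (hG.isTwoCograph_induce hcard).not_twoConnected_and_compl ⟨hv, hvc⟩

end IsIMMNon2Cograph

theorem two_cases_induced_minor_minimal {V : Type} [Fintype V] [DecidableEq V]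
    (G : SimpleGraph V) (hG : IsIMMNon2Cograph G) (hGc : IsIMMNon2Cograph Gᶜ) :
    (CriticallyTwoConnected G ∨ CriticallyTwoConnected Gᶜ) ∨
      (HasConnectivityTwo G ∧ HasConnectivityTwo Gᶜ) := by
  obtain ⟨h2G, h2Gc⟩ := hG.twoConnected_and_compl
  have h4 := h2G.four_le_card h2Gc
  refine or_iff_not_imp_left.2 fun hcrit => ?_
  obtain ⟨hcritG, hcritGc⟩ := not_or.1 hcrit
  obtain ⟨v, hv⟩ : ∃ v, TwoConnected (G.induce ({v}ᶜ : Set V)) := by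
    simpa [CriticallyTwoConnected, h2G] using hcritG
  obtain ⟨w, hw⟩ : ∃ w, TwoConnected (Gᶜ.induce ({w}ᶜ : Set V)) := by
    simpa [CriticallyTwoConnected, h2Gc] using hcritGc
  refine ⟨?_, hG.hasConnectivityTwo_compl_of_twoConnected_induce h2Gc h4 hv⟩
  simpa using hGc.hasConnectivityTwo_compl_of_twoConnected_induce (by simpa using h2G) h4 hw
end
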